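/- Intuitionistic assert statements with monotone well-definedness are bounded mono and bounded framing: let (Σ, ⊕, u) be a partial commutative monoid and A an assertion such that A(φ) ≠ Error and φ' ⪰ φ imply A(φ') ≠ Error. Then for every resource bound T ⊆ Σ, both mono(T) and framing(T) hold for the statement assert A (with ver(φ) iff A(φ) ≠ Error and φ ⪰ i for some i ∈ ⟨A⟩, and sem(φ) = {φ}). -/

import Mathlib

/-- A partial commutative monoid: `op` is a partial (Option-valued), commutative,
associative binary operation with neutral element `unit`. The `Option.bind`
formulation of associativity also entails that whenever a sum is defined,
so are all of its subsums. -/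
structure PCM (S : Type*) where
  op : S → S → Option S
  unit : S
  comm : ∀ a b, op a b = op b a
  assoc : ∀ a b c, (op a b).bind (fun ab => op ab c) = (op b c).bind (fun bc => op a bc)
  unit_op : ∀ a, op unit a = some a

namespace PCM

variable {S : Type*} (P : PCM S)

/-- `φ # φ'`: the sum is defined. -/
def compat (a b : S) : Prop := (P.op a b).isSome

/-- `b ⪰ a` : `b = a ⊕ c` for some `c`. -/
def succ (b a : S) : Prop := ∃ c, P.op a c = some b

/-- `p` is pure iff `p # p` and `p = p ⊕ p`. -/
def pure (p : S) : Prop := P.op p p = some p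

/-- Lifted addition on sets of states. -/
def setOp (T U : Set S) : Set S := {x | ∃ a ∈ T, ∃ b ∈ U, P.op a b = some x}

/-- Lifted order on sets of states: every element of `T` dominates some element of `U`. -/
def setSucc (T U : Set S) : Prop := ∀ a ∈ T, ∃ b ∈ U, P.succ a b

/-- Bounded (safety and output) monotonicity for a verifier `(ver, sem)` with
resource bound `T`. -/
def mono (ver : S → Prop) (sem : S → Set S) (T : Set S) : Prop :=
  ∀ φ₁ φ₂ : S, (∃ φ₃ ∈ T, P.succ φ₃ φ₂) → P.succ φ₂ φ₁ → ver φ₁ →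
    ver φ₂ ∧ P.setSucc (sem φ₂) (sem φ₁)

/-- Bounded framing for a verifier `(ver, sem)` with resource bound `T`. -/
def framing (ver : S → Prop) (sem : S → Set S) (T : Set S) : Prop :=
  ∀ φ r φr : S, P.op φ r = some φr → (∃ φ' ∈ T, P.succ φ' φr) → ver φ →
    ver φr ∧ P.setSucc (sem φr) (P.setOp (sem φ) {r})

end PCM

/-- An assertion is a function `S → Option Bool`: `some true` is ⊤, `some false` is ⊥,
and `none` is Error; `⟨A⟩` is the set of states where it evaluates to ⊤. -/
def satStates {S : Type*} (A : S → Option Bool) : Set S := {i | A i = some true}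

/-- Verification of the intuitionistic `assert A`: the assertion must be well-defined
and hold in some state below the current one. -/
def assertVer {S : Type*} (P : PCM S) (A : S → Option Bool) (φ : S) : Prop :=
  A φ ≠ none ∧ ∃ i ∈ satStates A, P.succ φ i

/-- Semantics of `assert A`: the state is unchanged. -/
def assertSem {S : Type*} (φ : S) : Set S := {φ}

/-!
Since `⪰` is transitive, monotone well-definedness makes the verification condition of
`assert A` upward closed. A verifier that is upward closed and leaves the state unchanged is
mono and framing for any resource bound: `φ₂ ⪰ φ₁` is exactly the required output relation, and
`φ ⊕ r` lies in `{φ} ⊕ {r}`.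
-/

namespace PCM

variable {S : Type*} (P : PCM S)

theorem succ_refl (a : S) : P.succ a a :=
  ⟨P.unit, by rw [P.comm]; exact P.unit_op a⟩

theorem succ_trans {a b c : S} (hba : P.succ b a) (hcb : P.succ c b) : P.succ c a := by
  obtain ⟨x, hx⟩ := hba
  obtain ⟨y, hy⟩ := hcb
  -- `(a ⊕ x) ⊕ y` is defined, so by associativity `x ⊕ y` is defined too.
  have h := P.assoc a x y
  rw [hx, Option.bind_some, hy] at h
  cases hxy : P.op x y with
  | none => simp [hxy] at h
  | some z => exact ⟨z, by simpa [hxy] using h.symm⟩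

variable {P}

theorem mono_assertSem {ver : S → Prop} (hver : ∀ φ φ', ver φ → P.succ φ' φ → ver φ')
    (T : Set S) : P.mono ver assertSem T := by
  rintro φ₁ φ₂ - h₂₁ h₁
  refine ⟨hver φ₁ φ₂ h₁ h₂₁, ?_⟩
  rintro _ rfl
  exact ⟨φ₁, rfl, h₂₁⟩

theorem framing_assertSem {ver : S → Prop} (hver : ∀ φ φ', ver φ → P.succ φ' φ → ver φ')
    (T : Set S) : P.framing ver assertSem T := by
  rintro φ r φr hφr - hφ
  refine ⟨hver φ φr hφ ⟨r, hφr⟩, ?_⟩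
  rintro a rfl
  exact ⟨a, ⟨φ, rfl, r, rfl, hφr⟩, P.succ_refl a⟩

end PCM

theorem assertVer_of_succ {S : Type*} {P : PCM S} {A : S → Option Bool}
    (hwd : ∀ φ φ' : S, A φ ≠ none → P.succ φ' φ → A φ' ≠ none) {φ φ' : S}
    (hφ : assertVer P A φ) (hφ' : P.succ φ' φ) : assertVer P A φ' := by
  obtain ⟨hA, i, hi, hφi⟩ := hφ
  exact ⟨hwd φ φ' hA hφ', i, hi, P.succ_trans hφi hφ'⟩

/-- Intuitionistic assert statements whose well-definedness is monotone are bounded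
mono and bounded framing for every resource bound. -/
theorem assert_mono_and_framing {S : Type*} (P : PCM S) (A : S → Option Bool)
    (hwd : ∀ φ φ' : S, A φ ≠ none → P.succ φ' φ → A φ' ≠ none) :
    ∀ T : Set S, P.mono (assertVer P A) (assertSem) T ∧
      P.framing (assertVer P A) (assertSem) T := fun T =>
  ⟨PCM.mono_assertSem (fun _ _ => assertVer_of_succ hwd) T,
    PCM.framing_assertSem (fun _ _ => assertVer_of_succ hwd) T⟩
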